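/- arXiv:2509.07281 — 2 statements merged into one kernel-verified Lean document; each statement's English description precedes it below -/
import Mathlib

section
/- Let d ≥ 2 and let real parameters λ^(k)_M be given for k ∈ {1,2} and subsets M of {1,…,d} with |M| ≥ 2, satisfying ∑_{j=2}^d [ (√3)^j ∑_{|M|=j} |λ^(1)_M| + (√5)^j ∑_{|M|=j} |λ^(2)_M| ] ≤ 1. Then the function c(u₁,…,u_d) = 1 + ∑_{k=1}^2 ∑_{j=2}^d ∑_{M ⊆ {1,…,d}, |M| = j} λ^(k)_M ∏_{m ∈ M} φ_k(u_m) is nonnegative for all (u₁,…,u_d) ∈ [0,1]^d. -/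
open MeasureTheory ProbabilityTheory Real Finset

/-- The shifted Legendre-type functions: `φ₁(x) = √3 (2x − 1)` and
`φ₂(x) = √5 (6x² − 6x + 1)`. -/
noncomputable def phiFGM (k : ℕ) (x : ℝ) : ℝ :=
  if k = 1 then Real.sqrt 3 * (2 * x - 1) else Real.sqrt 5 * (6 * x ^ 2 - 6 * x + 1)

/-- Antiderivatives: `Φ₁(x) = √3 (x² − x)` and `Φ₂(x) = √5 (2x³ − 3x² + x)`. -/
noncomputable def PhiFGM (k : ℕ) (x : ℝ) : ℝ :=
  if k = 1 then Real.sqrt 3 * (x ^ 2 - x) else Real.sqrt 5 * (2 * x ^ 3 - 3 * x ^ 2 + x)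

/-- The density of the extended `d`-variate FGM copula with parameters `lam k M`:
`c(u) = 1 + ∑_{k=1}^2 ∑_{M ⊆ {1,…,d}, |M| ≥ 2} λ^(k)_M ∏_{m ∈ M} φ_k(u_m)`. -/
noncomputable def fgmDensity (d : ℕ) (lam : ℕ → Finset (Fin d) → ℝ) (u : Fin d → ℝ) : ℝ :=
  1 + ∑ k ∈ Finset.Icc 1 2, ∑ M ∈ Finset.univ.powerset.filter (fun M : Finset (Fin d) => 2 ≤ M.card),
      lam k M * ∏ m ∈ M, phiFGM k (u m)

/-- The admissibility constraint
`∑_{j=2}^d [ (√3)^j ∑_{|M|=j} |λ^(1)_M| + (√5)^j ∑_{|M|=j} |λ^(2)_M| ]` ≤ 1. -/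
def fgmAdmissible (d : ℕ) (lam : ℕ → Finset (Fin d) → ℝ) : Prop :=
  ∑ M ∈ Finset.univ.powerset.filter (fun M : Finset (Fin d) => 2 ≤ M.card),
      (Real.sqrt 3 ^ M.card * |lam 1 M| + Real.sqrt 5 ^ M.card * |lam 2 M|) ≤ 1

lemma phi_bound1 {x : ℝ} (hx : x ∈ Set.Icc (0:ℝ) 1) : |phiFGM 1 x| ≤ Real.sqrt 3 := by
  obtain ⟨h0, h1⟩ := hx
  simp only [phiFGM, if_pos rfl, if_true, abs_mul, abs_of_nonneg (Real.sqrt_nonneg 3)]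
  calc Real.sqrt 3 * |2 * x - 1| ≤ Real.sqrt 3 * 1 := by
        gcongr
        exact abs_le.mpr ⟨by linarith, by linarith⟩
    _ = Real.sqrt 3 := mul_one _

lemma phi_bound2 {x : ℝ} (hx : x ∈ Set.Icc (0:ℝ) 1) : |phiFGM 2 x| ≤ Real.sqrt 5 := by
  obtain ⟨h0, h1⟩ := hx
  simp only [phiFGM, if_neg (by norm_num : (2:ℕ) ≠ 1), abs_mul,
    abs_of_nonneg (Real.sqrt_nonneg 5)]
  calc Real.sqrt 5 * |6 * x ^ 2 - 6 * x + 1| ≤ Real.sqrt 5 * 1 := by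
        gcongr
        exact abs_le.mpr ⟨by nlinarith, by nlinarith⟩
    _ = Real.sqrt 5 := mul_one _

theorem stmt_2 (d : ℕ) (hd : 2 ≤ d) (lam : ℕ → Finset (Fin d) → ℝ)
    (hlam : fgmAdmissible d lam) (u : Fin d → ℝ) (hu : ∀ j, u j ∈ Set.Icc (0:ℝ) 1) :
    0 ≤ fgmDensity d lam u := by
  unfold fgmDensity
  set F := Finset.univ.powerset.filter (fun M : Finset (Fin d) => 2 ≤ M.card) with hF
  have hIcc : (Finset.Icc 1 2 : Finset ℕ) = {1, 2} := rfl
  rw [hIcc, Finset.sum_insert (by norm_num), Finset.sum_singleton]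
  have key : |(∑ M ∈ F, lam 1 M * ∏ m ∈ M, phiFGM 1 (u m)) +
      ∑ M ∈ F, lam 2 M * ∏ m ∈ M, phiFGM 2 (u m)| ≤ 1 := by
    refine le_trans (abs_add_le _ _) (le_trans ?_ hlam)
    refine le_trans (add_le_add (Finset.abs_sum_le_sum_abs _ _)
      (Finset.abs_sum_le_sum_abs _ _)) ?_
    rw [← Finset.sum_add_distrib]
    refine Finset.sum_le_sum fun M _ => ?_
    have h1 : |lam 1 M * ∏ m ∈ M, phiFGM 1 (u m)| ≤ Real.sqrt 3 ^ M.card * |lam 1 M| := by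
      rw [abs_mul, mul_comm, abs_prod]
      have hp : ∏ m ∈ M, |phiFGM 1 (u m)| ≤ Real.sqrt 3 ^ M.card := by
        rw [← Finset.prod_const]
        exact Finset.prod_le_prod (fun i _ => abs_nonneg _) fun i _ => phi_bound1 (hu i)
      exact mul_le_mul_of_nonneg_right hp (abs_nonneg _)
    have h2 : |lam 2 M * ∏ m ∈ M, phiFGM 2 (u m)| ≤ Real.sqrt 5 ^ M.card * |lam 2 M| := by
      rw [abs_mul, mul_comm, abs_prod]
      have hp : ∏ m ∈ M, |phiFGM 2 (u m)| ≤ Real.sqrt 5 ^ M.card := by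
        rw [← Finset.prod_const]
        exact Finset.prod_le_prod (fun i _ => abs_nonneg _) fun i _ => phi_bound2 (hu i)
      exact mul_le_mul_of_nonneg_right hp (abs_nonneg _)
    exact add_le_add h1 h2
  have := neg_abs_le ((∑ M ∈ F, lam 1 M * ∏ m ∈ M, phiFGM 1 (u m)) +
      ∑ M ∈ F, lam 2 M * ∏ m ∈ M, phiFGM 2 (u m))
  linarith
end

section
/- Let d ≥ 2, let the extended FGM density c on [0,1]^d with parameters λ^(k)_M be given, and let P ⊆ {1,…,d} with |P| ≥ 2. Then integrating c(u₁,…,u_d) over the coordinates u_m for m ∉ P (each over [0,1]) yields the marginal density 1 + ∑_{k=1}^2 ∑_{j=2}^{|P|} ∑_{M ⊆ P, |M| = j} λ^(k)_M ∏_{m ∈ M} φ_k(u_m), as a function of (u_s)_{s ∈ P}. -/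
/-!
Each `φ_k` has mean zero on `[0,1]`. Splitting `∏_{m ∈ M} φ_k(u_m)` into the factors with
`m ∈ P` and those with `m ∉ P`, Fubini turns the integral of the latter over the product of the
uniform measures into `(∫₀¹ φ_k)^{|M \ P|}`, which vanishes unless `M ⊆ P`.
-/

open MeasureTheory ProbabilityTheory Real Finset

lemma hasDerivAt_PhiFGM (k : ℕ) (x : ℝ) : HasDerivAt (PhiFGM k) (phiFGM k x) x := by
  unfold phiFGM PhiFGM
  split
  · exact (((hasDerivAt_pow 2 x).sub (hasDerivAt_id x)).const_mul (√3)).congr_deriv (by ring)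
  · exact ((((hasDerivAt_pow 3 x).const_mul 2).sub ((hasDerivAt_pow 2 x).const_mul 3)).add
      (hasDerivAt_id x)).const_mul (√5) |>.congr_deriv (by push_cast; ring)

lemma continuous_phiFGM (k : ℕ) : Continuous (phiFGM k) := by
  unfold phiFGM
  split <;> fun_prop

lemma integral_phiFGM (k : ℕ) : ∫ x in Set.Icc (0 : ℝ) 1, phiFGM k x = 0 := by
  rw [integral_Icc_eq_integral_Ioc, ← intervalIntegral.integral_of_le zero_le_one,
    intervalIntegral.integral_eq_sub_of_hasDerivAt (fun x _ => hasDerivAt_PhiFGM k x)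
      ((continuous_phiFGM k).intervalIntegrable _ _)]
  unfold PhiFGM
  split <;> norm_num

section GluedProduct

variable {ι α β : Type*} [DecidableEq ι]

lemma Finset.prod_dite_mem_eq_mul [CommMonoid β] (P S : Finset ι) (f : α → β) (u : ι → α)
    (w : {m // m ∉ P} → α) :
    ∏ m ∈ S, f (if h : m ∈ P then u m else w ⟨m, h⟩) =
      (∏ m ∈ S ∩ P, f (u m)) * ∏ i ∈ S.subtype (· ∉ P), f (w i) := by
  rw [← prod_filter_mul_prod_filter_not S (· ∈ P), filter_mem_eq_inter,
    ← prod_subtype_eq_prod_filter]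
  congr 1
  · exact prod_congr rfl fun m hm => by rw [dif_pos (mem_inter.mp hm).2]
  · exact prod_congr rfl fun i _ => by rw [dif_neg i.2]

variable {𝕜 : Type*} [RCLike 𝕜] [Fintype ι] [MeasurableSpace α] {μ : Measure α}

lemma integrable_finset_prod_pi [IsFiniteMeasure μ] {g : α → 𝕜} (hg : Integrable g μ)
    (s : Finset ι) :
    Integrable (fun w : ι → α => ∏ i ∈ s, g (w i)) (Measure.pi fun _ => μ) := by
  simp_rw [← Fintype.prod_ite_mem s]
  exact Integrable.fintype_prod (f := fun i x => if i ∈ s then g x else 1) fun i => by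
    split_ifs
    exacts [hg, integrable_const 1]

lemma integral_finset_prod_pi_eq_pow [IsProbabilityMeasure μ] (g : α → 𝕜) (s : Finset ι) :
    ∫ w : ι → α, ∏ i ∈ s, g (w i) ∂(Measure.pi fun _ => μ) = (∫ x, g x ∂μ) ^ s.card := by
  simp_rw [← Fintype.prod_ite_mem s]
  rw [integral_fintype_prod_eq_prod (fun i x => if i ∈ s then g x else 1), ← prod_const, ← Fintype.prod_ite_mem s]
  refine prod_congr rfl fun i _ => ?_
  split_ifs <;> simp

lemma integrable_prod_dite_mem [IsFiniteMeasure μ] {g : α → 𝕜} (hg : Integrable g μ)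
    (P S : Finset ι) (u : ι → α) :
    Integrable (fun w : {m // m ∉ P} → α => ∏ m ∈ S, g (if h : m ∈ P then u m else w ⟨m, h⟩))
      (Measure.pi fun _ => μ) := by
  simp_rw [prod_dite_mem_eq_mul]
  exact (integrable_finset_prod_pi hg _).const_mul _

lemma integral_prod_dite_mem_of_integral_eq_zero [IsProbabilityMeasure μ] {g : α → 𝕜}
    (hg : ∫ x, g x ∂μ = 0) (P S : Finset ι) (u : ι → α) :
    ∫ w : {m // m ∉ P} → α, ∏ m ∈ S, g (if h : m ∈ P then u m else w ⟨m, h⟩)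
        ∂(Measure.pi fun _ => μ) =
      if S ⊆ P then ∏ m ∈ S, g (u m) else 0 := by
  simp_rw [prod_dite_mem_eq_mul]
  rw [integral_const_mul, integral_finset_prod_pi_eq_pow, hg, zero_pow_eq]
  by_cases hSP : S ⊆ P
  · have hempty : S.subtype (· ∉ P) = ∅ :=
      subtype_eq_empty.mpr fun _ hmP hmS => hmP (hSP hmS)
    rw [if_pos (card_eq_zero.mpr hempty), if_pos hSP, mul_one, inter_eq_left.mpr hSP]
  · obtain ⟨m, hmS, hmP⟩ := not_subset.mp hSP
    have hne : #(S.subtype (· ∉ P)) ≠ 0 := card_ne_zero.mpr ⟨⟨m, hmP⟩, by simpa using hmS⟩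
    rw [if_neg hne, if_neg hSP, mul_zero]

theorem integral_one_add_sum_prod_dite_mem {κ : Type*} [IsProbabilityMeasure μ] (K : Finset κ)
    (𝓜 : Finset (Finset ι)) (c : κ → Finset ι → 𝕜) (φ : κ → α → 𝕜)
    (hφ_int : ∀ k ∈ K, Integrable (φ k) μ) (hφ : ∀ k ∈ K, ∫ x, φ k x ∂μ = 0)
    (P : Finset ι) (u : ι → α) :
    ∫ w : {m // m ∉ P} → α,
        (1 + ∑ k ∈ K, ∑ M ∈ 𝓜, c k M * ∏ m ∈ M, φ k (if h : m ∈ P then u m else w ⟨m, h⟩))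
        ∂(Measure.pi fun _ => μ) =
      1 + ∑ k ∈ K, ∑ M ∈ 𝓜 with M ⊆ P, c k M * ∏ m ∈ M, φ k (u m) := by
  have hint : ∀ k ∈ K, ∀ M, Integrable (fun w : {m // m ∉ P} → α =>
      c k M * ∏ m ∈ M, φ k (if h : m ∈ P then u m else w ⟨m, h⟩)) (Measure.pi fun _ => μ) :=
    fun k hk M => (integrable_prod_dite_mem (hφ_int k hk) P M u).const_mul _
  rw [integral_add (integrable_const 1)
      (integrable_finsetSum _ fun k hk => integrable_finsetSum _ fun M _ => hint k hk M),
    integral_const, integral_finsetSum _ fun k hk => integrable_finsetSum _ fun M _ => hint k hk M]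
  simp only [probReal_univ, one_smul]
  refine congrArg _ (sum_congr rfl fun k hk => ?_)
  rw [integral_finsetSum _ fun M _ => hint k hk M, sum_filter]
  refine sum_congr rfl fun M _ => ?_
  rw [integral_const_mul, integral_prod_dite_mem_of_integral_eq_zero (hφ k hk), mul_ite, mul_zero]

end GluedProduct

theorem stmt_5_general (d : ℕ) (lam : ℕ → Finset (Fin d) → ℝ)
    (P : Finset (Fin d)) (u : Fin d → ℝ) :
    ∫ w : {m : Fin d // m ∉ P} → ℝ,
        fgmDensity d lam (fun m => if h : m ∈ P then u m else w ⟨m, h⟩)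
        ∂(Measure.pi fun _ : {m : Fin d // m ∉ P} => volume.restrict (Set.Icc (0:ℝ) 1)) =
      1 + ∑ k ∈ Finset.Icc 1 2, ∑ M ∈ P.powerset.filter (fun M : Finset (Fin d) => 2 ≤ M.card),
          lam k M * ∏ m ∈ M, phiFGM k (u m) := by
  have : IsProbabilityMeasure (volume.restrict (Set.Icc (0:ℝ) 1)) := ⟨by simp⟩
  have hsubsets : ((univ : Finset (Fin d)).powerset.filter (2 ≤ #·)).filter (· ⊆ P) =
      P.powerset.filter (2 ≤ #·) := by
    ext M
    simp [and_comm]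
  unfold fgmDensity
  rw [integral_one_add_sum_prod_dite_mem _ _ lam phiFGM
    (fun k _ => (continuous_phiFGM k).integrableOn_Icc) (fun k _ => integral_phiFGM k),
    hsubsets]

theorem stmt_5 (d : ℕ) (hd : 2 ≤ d) (lam : ℕ → Finset (Fin d) → ℝ)
    (P : Finset (Fin d)) (hP : 2 ≤ P.card) (u : Fin d → ℝ)
    (hu : ∀ s ∈ P, u s ∈ Set.Icc (0:ℝ) 1) :
    ∫ w : {m : Fin d // m ∉ P} → ℝ,
        fgmDensity d lam (fun m => if h : m ∈ P then u m else w ⟨m, h⟩)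
        ∂(Measure.pi fun _ : {m : Fin d // m ∉ P} => volume.restrict (Set.Icc (0:ℝ) 1)) =
      1 + ∑ k ∈ Finset.Icc 1 2, ∑ M ∈ P.powerset.filter (fun M : Finset (Fin d) => 2 ≤ M.card),
          lam k M * ∏ m ∈ M, phiFGM k (u m) :=
  stmt_5_general d lam P u
end
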